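/- arXiv:2510.03661 — 5 statements merged into one kernel-verified Lean document; each statement's English description precedes it below -/
import Mathlib

section
/- Let η, r, δ > 0 and let μ(t) = Λ·exp(kt) + B with Λ < 0, k < 0, B > 0. Define φ(t) = 1 − 4(r+δ)μ(t)/(η + 2(r+δ)μ(t)) and assume η + 2(r+δ)μ(t) > 0 and φ(t) ≥ 0 for all t ≥ 0. Then φ is strictly decreasing in t. -/
open Set

/-- Proposition 4(2): the proportional technology subsidy
`φ t = 1 − 4(r+δ)μ t / (η + 2(r+δ)μ t)` is strictly decreasing in `t`
when the costate `μ t = Λ exp(k t) + B` (with `Λ, k < 0 < B`) increases. -/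
theorem stmt_4 (η r δ Λ k B : ℝ) (hη : 0 < η) (hr : 0 < r) (hδ : 0 < δ)
    (hΛ : Λ < 0) (hk : k < 0) (hB : 0 < B) :
    let μ : ℝ → ℝ := fun t => Λ * Real.exp (k * t) + B
    let φ : ℝ → ℝ := fun t => 1 - 4 * (r + δ) * μ t / (η + 2 * (r + δ) * μ t)
    (∀ t : ℝ, 0 ≤ t → 0 < η + 2 * (r + δ) * μ t) →
    (∀ t : ℝ, 0 ≤ t → 0 ≤ φ t) →
    StrictAntiOn φ (Ici 0) := by
  intro μ φ hden _
  intro s hs t ht hst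
  have hexp : Real.exp (k * t) < Real.exp (k * s) := by
    apply Real.exp_lt_exp.mpr
    nlinarith
  have hμ : μ s < μ t := by
    simp only [μ]
    nlinarith
  have hds := hden s hs
  have hdt := hden t ht
  simp only [φ] at *
  have h : 4 * (r + δ) * μ s / (η + 2 * (r + δ) * μ s)
      < 4 * (r + δ) * μ t / (η + 2 * (r + δ) * μ t) := by
    rw [div_lt_div_iff₀ hds hdt]
    nlinarith [mul_pos (mul_pos (show (0:ℝ) < 4*(r+δ) by linarith) hη) (sub_pos.mpr hμ)]
  linarith
end

section
/- Fix α, δ, r, β, γ₁, γ₂, θ₁, θ₃ > 0 and define, as a function of θ₂ ≥ 0, Δ(θ₂) = 2θ₁²γ₁² + (2θ₂² + θ₃²)γ₂², and assume 8βδ(r+δ) > Δ(θ₂). Then the steady-state quality level Q∞(θ₂) = 2γ₁θ₁²α/(8βδ(r+δ) − Δ(θ₂)), goodwill level G∞(θ₂) = γ₂(2θ₂² + θ₃²)α/(8βδ(r+δ) − Δ(θ₂)), and costate λ∞(θ₂) = αδ/(8βδ(r+δ) − Δ(θ₂)) are all strictly increasing in θ₂ on the region where the denominator is positive. In particular, introducing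 blockchain (θ₂ > 0 versus θ₂ = 0) strictly increases Q∞, G∞, and λ∞. -/
/-- Proposition 6 (blockchain impact): the no-subsidy steady states
`Qinf, Ginf, λ∞` are strictly increasing in the blockchain effectiveness `θ₂`
on the region where the stability denominator `8βδ(r+δ) − Δ(θ₂)` is positive. -/
theorem stmt_6 (α δ r β γ₁ γ₂ θ₁ θ₃ : ℝ)
    (hα : 0 < α) (hδ : 0 < δ) (hr : 0 < r) (hβ : 0 < β)
    (hγ₁ : 0 < γ₁) (hγ₂ : 0 < γ₂) (hθ₁ : 0 < θ₁) (hθ₃ : 0 < θ₃) :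
    let Δ : ℝ → ℝ := fun θ₂ => 2 * θ₁ ^ 2 * γ₁ ^ 2 + (2 * θ₂ ^ 2 + θ₃ ^ 2) * γ₂ ^ 2
    let Qinf : ℝ → ℝ := fun θ₂ => 2 * γ₁ * θ₁ ^ 2 * α / (8 * β * δ * (r + δ) - Δ θ₂)
    let Ginf : ℝ → ℝ := fun θ₂ => γ₂ * (2 * θ₂ ^ 2 + θ₃ ^ 2) * α / (8 * β * δ * (r + δ) - Δ θ₂)
    let laminf : ℝ → ℝ := fun θ₂ => α * δ / (8 * β * δ * (r + δ) - Δ θ₂)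
    ∀ θ₂ θ₂' : ℝ, 0 ≤ θ₂ → θ₂ < θ₂' → 8 * β * δ * (r + δ) > Δ θ₂' →
      Qinf θ₂ < Qinf θ₂' ∧ Ginf θ₂ < Ginf θ₂' ∧ laminf θ₂ < laminf θ₂' := by
  intro Δ Qinf Ginf laminf θ₂ θ₂' h0 hlt hstab
  have hθsq : θ₂ ^ 2 < θ₂' ^ 2 := by nlinarith
  have hΔ : Δ θ₂ < Δ θ₂' := by
    simp only [Δ]; nlinarith [mul_pos (sub_pos.mpr hθsq) (pow_pos hγ₂ 2)]
  set K := 8 * β * δ * (r + δ) with hK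
  have hb' : 0 < K - Δ θ₂' := sub_pos.mpr hstab
  have hb : 0 < K - Δ θ₂ := by linarith
  have hbb : K - Δ θ₂' < K - Δ θ₂ := by linarith
  refine ⟨?_, ?_, ?_⟩
  · exact div_lt_div_of_pos_left (by positivity) hb' hbb
  · rw [div_lt_div_iff₀ hb hb']
    have ha : 0 < γ₂ * (2 * θ₂ ^ 2 + θ₃ ^ 2) * α := by positivity
    have ha' : γ₂ * (2 * θ₂ ^ 2 + θ₃ ^ 2) * α < γ₂ * (2 * θ₂' ^ 2 + θ₃ ^ 2) * α := by
      nlinarith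
    nlinarith
  · exact div_lt_div_of_pos_left (by positivity) hb' hbb
end

section
/- Let α, β, γ₁, γ₂, θ₁, θ₂, θ₃, δ, r > 0 with Δ = 2θ₁²γ₁² + (2θ₂² + θ₃²)γ₂² and 8βδ(r+δ) > Δ. Set n = Δ/(8βδ(r+δ)) ∈ (0,1). Suppose (6 − n)/(1 − n) > γ₂²(2θ₂² + θ₃²)/(γ₁²θ₁²). For η > 0, let λᵀ(∞) = (4αδ(r+δ) + ηγ₁²θ₁²)/(4(r+δ)(8βδ(r+δ) + γ₁²θ₁² − Δ)), Qᵀ(∞) = (γ₁θ₁²/δ)(λᵀ(∞) + η/(4(r+δ))), Gᵀ(∞) = (γ₂(2θ₂²+θ₃²)/δ)·λᵀ(∞), and let Aᵀ(∞) = γ₁·Qᵀ(∞) + γ₂·Gᵀ(∞) be the steady-state aggregate level under Policy (T). Let Qˢ(∞) = 2γ₁θ₁²(α+βη)/(32βδ(r+δ)−Δ), Gˢ(∞) = γ₂(2θ₂²+θ₃²)(α+βη)/(32βδ(r+δ)−Δ), and let Aˢ(∞) = γ₁·Qˢ(∞) + γ₂·Gˢ(∞) be the corresponding steady-state aggregate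 level. Then for every η > 0, Aᵀ(∞) > Aˢ(∞). -/
set_option maxHeartbeats 1000000 in
lemma aux13 (a b B K d α η : ℝ) (ha : 0 < a) (hb : 0 < b) (hK : 0 < K) (hd : 0 < d)
    (hα : 0 < α) (hη : 0 < η) (hB1 : 2 * a + b < B)
    (key : 0 < 6 * a * B - 2 * a ^ 2 + a * b + b ^ 2 - b * B) :
    (2 * a + b) * (α + B / (8 * d * K) * η) / (4 * B - (2 * a + b)) <
      a / d * ((4 * α * d * K + η * a) / (4 * K * (B + a - (2 * a + b))) + η / (4 * K)) +
        b / d * ((4 * α * d * K + η * a) / (4 * K * (B + a - (2 * a + b)))) := by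
  have hd1 : 0 < B + a - (2 * a + b) := by linarith
  have hd2 : 0 < 4 * B - (2 * a + b) := by linarith
  rw [← sub_pos]
  have expand : a / d * ((4 * α * d * K + η * a) / (4 * K * (B + a - (2 * a + b))) + η / (4 * K)) +
        b / d * ((4 * α * d * K + η * a) / (4 * K * (B + a - (2 * a + b)))) -
      (2 * a + b) * (α + B / (8 * d * K) * η) / (4 * B - (2 * a + b)) =
      (8 * α * d * K * B * (2 * a + 3 * b) +
          η * B * (6 * a * B - 2 * a ^ 2 + a * b + b ^ 2 - b * B)) /
        (8 * d * K * ((B + a - (2 * a + b)) * (4 * B - (2 * a + b)))) := by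
    have e1 : B + a - (2 * a + b) ≠ 0 := hd1.ne'
    have e2 : 4 * B - (2 * a + b) ≠ 0 := hd2.ne'
    rw [div_add_div _ _ (by positivity) (by positivity), div_mul_div_comm, div_mul_div_comm, div_add_div _ _ (by positivity) (by positivity), div_sub_div _ _ (by positivity) e2, div_eq_div_iff (by positivity) (by positivity)]
    field_simp
    ring
  rw [expand]
  have hnum : 0 < 8 * α * d * K * B * (2 * a + 3 * b) +
      η * B * (6 * a * B - 2 * a ^ 2 + a * b + b ^ 2 - b * B) := by
    have hBpos : 0 < B := by linarith
    have t1 : 0 < 8 * α * d * K * B * (2 * a + 3 * b) := by positivity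
    have t2 : 0 < η * B * (6 * a * B - 2 * a ^ 2 + a * b + b ^ 2 - b * B) :=
      mul_pos (mul_pos hη hBpos) key
    linarith
  exact div_pos hnum (by positivity)

set_option maxHeartbeats 1000000 in
/-- Proposition 12(2): if `(6 − n)/(1 − n) > γ₂²(2θ₂² + θ₃²)/(γ₁²θ₁²)` where
`n = Δ/(8βδ(r+δ))`, then the steady-state aggregate quality-goodwill level under
the technology subsidy Policy (T) exceeds that under the volume subsidy
Policy (S). -/
theorem stmt_13 (α β γ₁ γ₂ θ₁ θ₂ θ₃ δ r η : ℝ)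
    (hα : 0 < α) (hβ : 0 < β) (hγ₁ : 0 < γ₁) (hγ₂ : 0 < γ₂)
    (hθ₁ : 0 < θ₁) (hθ₂ : 0 < θ₂) (hθ₃ : 0 < θ₃) (hδ : 0 < δ) (hr : 0 < r)
    (hη : 0 < η)
    (hstab : 8 * β * δ * (r + δ) >
      2 * θ₁ ^ 2 * γ₁ ^ 2 + (2 * θ₂ ^ 2 + θ₃ ^ 2) * γ₂ ^ 2)
    (hstab' : 32 * β * δ * (r + δ) >
      2 * θ₁ ^ 2 * γ₁ ^ 2 + (2 * θ₂ ^ 2 + θ₃ ^ 2) * γ₂ ^ 2) :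
    let Δ : ℝ := 2 * θ₁ ^ 2 * γ₁ ^ 2 + (2 * θ₂ ^ 2 + θ₃ ^ 2) * γ₂ ^ 2
    let n : ℝ := Δ / (8 * β * δ * (r + δ))
    (6 - n) / (1 - n) > γ₂ ^ 2 * (2 * θ₂ ^ 2 + θ₃ ^ 2) / (γ₁ ^ 2 * θ₁ ^ 2) →
    let lamT : ℝ := (4 * α * δ * (r + δ) + η * γ₁ ^ 2 * θ₁ ^ 2) /
      (4 * (r + δ) * (8 * β * δ * (r + δ) + γ₁ ^ 2 * θ₁ ^ 2 - Δ))
    let QT : ℝ := (γ₁ * θ₁ ^ 2 / δ) * (lamT + η / (4 * (r + δ)))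
    let GT : ℝ := (γ₂ * (2 * θ₂ ^ 2 + θ₃ ^ 2) / δ) * lamT
    let AT : ℝ := γ₁ * QT + γ₂ * GT
    let QS : ℝ := 2 * γ₁ * θ₁ ^ 2 * (α + β * η) / (32 * β * δ * (r + δ) - Δ)
    let GS : ℝ := γ₂ * (2 * θ₂ ^ 2 + θ₃ ^ 2) * (α + β * η) / (32 * β * δ * (r + δ) - Δ)
    let AS : ℝ := γ₁ * QS + γ₂ * GS
    AT > AS := by
  intro Δ n h lamT QT GT AT QS GS AS
  simp only [AT, QT, GT, AS, QS, GS, lamT, n, Δ] at h ⊢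
  clear_value Δ n lamT QT GT AT QS GS AS
  clear Δ n lamT QT GT AT QS GS AS
  have hK : (0:ℝ) < r + δ := by linarith
  set a : ℝ := γ₁ ^ 2 * θ₁ ^ 2 with ha_def
  set b : ℝ := γ₂ ^ 2 * (2 * θ₂ ^ 2 + θ₃ ^ 2) with hb_def
  set B : ℝ := 8 * β * δ * (r + δ) with hB_def
  clear_value a b B
  have ha : 0 < a := by rw [ha_def]; positivity
  have hb : 0 < b := by rw [hb_def]; positivity
  have hBpos : 0 < B := by rw [hB_def]; positivity
  have hΔab : (2 * θ₁ ^ 2 * γ₁ ^ 2 + (2 * θ₂ ^ 2 + θ₃ ^ 2) * γ₂ ^ 2) = 2 * a + b := by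
    rw [ha_def, hb_def]; ring
  rw [hΔab] at h hstab hstab' ⊢
  -- extract the key polynomial inequality from h
  have h1 : 0 < 1 - (2 * a + b) / B := by
    rw [sub_pos, div_lt_one hBpos]; linarith
  rw [gt_iff_lt, div_lt_div_iff₀ (by positivity) h1] at h
  have hd : (2 * a + b) / B * B = 2 * a + b := div_mul_cancel₀ _ (ne_of_gt hBpos)
  have h2 := mul_lt_mul_of_pos_right h hBpos
  have key : 0 < 6 * a * B - 2 * a ^ 2 + a * b + b ^ 2 - b * B := by
    nlinarith [h2, hd, ha.le, hb.le, mul_le_mul_of_nonneg_left hd.le ha.le,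
      mul_le_mul_of_nonneg_left hd.le hb.le,
      mul_le_mul_of_nonneg_left hd.ge ha.le,
      mul_le_mul_of_nonneg_left hd.ge hb.le]
  have h32 : 32 * β * δ * (r + δ) = 4 * B := by rw [hB_def]; ring
  rw [gt_iff_lt, h32]
  have hβeq : α + B / (8 * δ * (r + δ)) * η = α + β * η := by
    rw [hB_def]
    field_simp
  have eAT :
      γ₁ * (γ₁ * θ₁ ^ 2 / δ *
          ((4 * α * δ * (r + δ) + η * γ₁ ^ 2 * θ₁ ^ 2) /
              (4 * (r + δ) * (B + a - (2 * a + b))) + η / (4 * (r + δ)))) +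
        γ₂ * (γ₂ * (2 * θ₂ ^ 2 + θ₃ ^ 2) / δ *
          ((4 * α * δ * (r + δ) + η * γ₁ ^ 2 * θ₁ ^ 2) /
              (4 * (r + δ) * (B + a - (2 * a + b))))) =
      a / δ * ((4 * α * δ * (r + δ) + η * a) / (4 * (r + δ) * (B + a - (2 * a + b)))
          + η / (4 * (r + δ))) +
        b / δ * ((4 * α * δ * (r + δ) + η * a) / (4 * (r + δ) * (B + a - (2 * a + b)))) := by
    rw [ha_def, hb_def]; ring
  have eAS :
      γ₁ * (2 * γ₁ * θ₁ ^ 2 * (α + β * η) / (4 * B - (2 * a + b))) +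
        γ₂ * (γ₂ * (2 * θ₂ ^ 2 + θ₃ ^ 2) * (α + β * η) / (4 * B - (2 * a + b))) =
      (2 * a + b) * (α + β * η) / (4 * B - (2 * a + b)) := by
    rw [ha_def, hb_def]; ring
  rw [eAT, eAS, ← hβeq]
  exact aux13 a b B (r + δ) δ α η ha hb hK hδ hα hη (by linarith) key
end

section
/- Let ψ ∈ [0, 1), α, β > 0, and Q, G ≥ 0, and set A = α + γ₁Q + γ₂G with γ₁, γ₂ > 0. Consider demand D = α − β(1−ψ)p + γ₁Q + γ₂G. If the retailer maximizes D·(p − ω) over p and the manufacturer maximizes D·ω over ω anticipating the retailer's best response, then the equilibrium prices are ω(ψ) = A/(2β(1−ψ)) and p(ψ) = 3A/(4β(1−ψ)), and the resulting equilibrium demand D = A/4 is independent of ψ. -/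
lemma aux_l1 (a b ω p : ℝ) (hb : 0 < b) (hp : p ≠ (a + b*ω)/(2*b)) :
    (a - b*p)*(p - ω) < (a - b*((a + b*ω)/(2*b)))*((a + b*ω)/(2*b) - ω) := by
  have hb' : b ≠ 0 := ne_of_gt hb
  have h2 : (0:ℝ) < (p - (a + b*ω)/(2*b))^2 := by
    have := sub_ne_zero.mpr hp; positivity
  have key : (a - b*((a + b*ω)/(2*b)))*((a + b*ω)/(2*b) - ω) - (a - b*p)*(p - ω)
      = b * (p - (a + b*ω)/(2*b))^2 := by field_simp; ring
  nlinarith [mul_pos hb h2]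

lemma aux_l2 (a b ω : ℝ) (hb : 0 < b) (hω : ω ≠ a/(2*b)) :
    (a - b*((a + b*ω)/(2*b)))*ω < (a - b*((a + b*(a/(2*b)))/(2*b)))*(a/(2*b)) := by
  have hb' : b ≠ 0 := ne_of_gt hb
  have h2 : (0:ℝ) < (ω - a/(2*b))^2 := by
    have := sub_ne_zero.mpr hω; positivity
  have key : (a - b*((a + b*(a/(2*b)))/(2*b)))*(a/(2*b)) - (a - b*((a + b*ω)/(2*b)))*ω
      = b * (ω - a/(2*b))^2 / 2 := by field_simp; ring
  nlinarith [mul_pos hb h2]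

lemma aux_l3 (a b : ℝ) (hb : b ≠ 0) : (a + b*(a/(2*b)))/(2*b) = 3*a/(4*b) := by
  field_simp; ring

lemma aux_l4 (a b : ℝ) (hb : b ≠ 0) : a - b*((a + b*(a/(2*b)))/(2*b)) = a/4 := by
  field_simp; ring

/-- Proposition 5 (Customer-p model): under a proportional reimbursement rate
`ψ ∈ [0,1)`, with demand `D p = α − β(1−ψ)p + γ₁Q + γ₂G`, the equilibrium
prices are `ω(ψ) = A/(2β(1−ψ))` and `p(ψ) = 3A/(4β(1−ψ))`, and the equilibrium
demand equals `A/4`, independent of `ψ`. -/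
theorem stmt_16 (ψ α β γ₁ γ₂ Q G : ℝ) (hψ₀ : 0 ≤ ψ) (hψ₁ : ψ < 1)
    (hα : 0 < α) (hβ : 0 < β) (hγ₁ : 0 < γ₁) (hγ₂ : 0 < γ₂)
    (hQ : 0 ≤ Q) (hG : 0 ≤ G) :
    let A : ℝ := α + γ₁ * Q + γ₂ * G
    let D : ℝ → ℝ := fun p => α - β * (1 - ψ) * p + γ₁ * Q + γ₂ * G
    let pbr : ℝ → ℝ := fun ω => (A + β * (1 - ψ) * ω) / (2 * β * (1 - ψ))
    let ωeq : ℝ := A / (2 * β * (1 - ψ))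
    -- `pbr ω` is the unique maximizer of the retailer's profit given `ω`
    (∀ ω p : ℝ, p ≠ pbr ω → D p * (p - ω) < D (pbr ω) * (pbr ω - ω)) ∧
    -- `ωeq` is the unique maximizer of the manufacturer's profit anticipating `pbr`
    (∀ ω : ℝ, ω ≠ ωeq → D (pbr ω) * ω < D (pbr ωeq) * ωeq) ∧
    -- equilibrium retail price
    pbr ωeq = 3 * A / (4 * β * (1 - ψ)) ∧
    -- equilibrium demand is independent of ψ
    D (pbr ωeq) = A / 4 := by
  intro A D pbr ωeq
  have hb : 0 < β * (1 - ψ) := mul_pos hβ (by linarith)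
  have hb' : β * (1 - ψ) ≠ 0 := ne_of_gt hb
  set b : ℝ := β * (1 - ψ) with hbdef
  have hD : ∀ p, D p = A - b * p := fun p => by simp only [D, A, hbdef]; ring
  have hpbr : ∀ ω, pbr ω = (A + b * ω) / (2 * b) := fun ω => by
    simp only [pbr, hbdef]; ring_nf
  have hωeq : ωeq = A / (2 * b) := by simp only [ωeq, hbdef]; ring_nf
  refine ⟨?_, ?_, ?_, ?_⟩
  · intro ω p hp
    rw [hD, hD, hpbr]
    exact aux_l1 A b ω p hb (by rw [hpbr] at hp; exact hp)
  · intro ω hω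
    rw [hD, hD, hpbr, hpbr, hωeq]
    exact aux_l2 A b ω hb (by rw [hωeq] at hω; exact hω)
  · rw [hpbr, hωeq, aux_l3 A b hb']
    simp only [hbdef]; ring
  · rw [hD, hpbr, hωeq]; exact aux_l4 A b hb'
end

section
/- Let α, β, δ, r, γ₁, γ₂, θ₁, θ₂, θ₃, η > 0, Δ = 2θ₁²γ₁² + (2θ₂² + θ₃²)γ₂², with 8βδ(r+δ) > Δ and 32βδ(r+δ) > Δ. Then the Manufacturer-q steady-state technology effort qᵀ(∞) = γ₁θ₁(λᵀ(∞) + η/(4(r+δ))), with λᵀ(∞) = (4αδ(r+δ) + ηγ₁²θ₁²)/(4(r+δ)(8βδ(r+δ) + γ₁²θ₁² − Δ)), strictly exceeds the Manufacturer-D steady-state technology effort qˢ(∞) = 2γ₁θ₁·λˢ(∞) with λˢ(∞) = (α+βη)δ/(32βδ(r+δ) − Δ). -/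
lemma stmt_18_key (α β δ η s G E : ℝ) (hα : 0 < α) (hβ : 0 < β) (hδ : 0 < δ)
    (hη : 0 < η) (hs : 0 < s) (hG : 0 < G) (hE : 0 < E)
    (h1 : 2 * G + E < 8 * β * δ * s) :
    2 * ((α + β * η) * δ) / (32 * β * δ * s - (2 * G + E)) <
      (4 * α * δ * s + η * G) / (4 * s * (8 * β * δ * s + G - (2 * G + E))) +
        η / (4 * s) := by
  have h1' : 0 < 8 * β * δ * s - 2 * G - E := by linarith
  have h2 : 0 < 24 * β * δ * s - E := by nlinarith
  have hD2 : 0 < 32 * β * δ * s - (2 * G + E) := by nlinarith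
  have hD1 : 0 < 4 * s * (8 * β * δ * s + G - (2 * G + E)) := by
    apply mul_pos (by positivity); linarith
  rw [div_add_div _ _ (ne_of_gt hD1) (by positivity : (4:ℝ) * s ≠ 0),
    div_lt_div_iff₀ hD2 (by positivity)]
  have hA : 0 < (4*s) * (η * ((8*β*δ*s - 2*G - E) * (24*β*δ*s - E))) :=
    mul_pos (by positivity) (mul_pos hη (mul_pos h1' h2))
  have hB : 0 < (4*s) * (η * (40*β*δ*s*G)) := by positivity
  have hC : 0 < (4*s) * (64*α*β*δ^2*s^2) := by positivity
  have hD : 0 < (4*s) * (4*α*δ*s*E) := by positivity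
  nlinarith [hA, hB, hC, hD]

/-- Proposition 11(2): the Manufacturer-q steady-state technology effort
`qᵀ(∞) = γ₁θ₁(λᵀ(∞) + η/(4(r+δ)))` strictly exceeds the Manufacturer-D
steady-state technology effort `qˢ(∞) = 2γ₁θ₁ λˢ(∞)`. -/
theorem stmt_18 (α β δ r γ₁ γ₂ θ₁ θ₂ θ₃ η : ℝ)
    (hα : 0 < α) (hβ : 0 < β) (hδ : 0 < δ) (hr : 0 < r)
    (hγ₁ : 0 < γ₁) (hγ₂ : 0 < γ₂) (hθ₁ : 0 < θ₁) (hθ₂ : 0 < θ₂) (hθ₃ : 0 < θ₃)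
    (hη : 0 < η)
    (hstab : 8 * β * δ * (r + δ) >
      2 * θ₁ ^ 2 * γ₁ ^ 2 + (2 * θ₂ ^ 2 + θ₃ ^ 2) * γ₂ ^ 2)
    (hstab' : 32 * β * δ * (r + δ) >
      2 * θ₁ ^ 2 * γ₁ ^ 2 + (2 * θ₂ ^ 2 + θ₃ ^ 2) * γ₂ ^ 2) :
    let Δ : ℝ := 2 * θ₁ ^ 2 * γ₁ ^ 2 + (2 * θ₂ ^ 2 + θ₃ ^ 2) * γ₂ ^ 2
    let lamT : ℝ := (4 * α * δ * (r + δ) + η * γ₁ ^ 2 * θ₁ ^ 2) /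
      (4 * (r + δ) * (8 * β * δ * (r + δ) + γ₁ ^ 2 * θ₁ ^ 2 - Δ))
    let lamS : ℝ := (α + β * η) * δ / (32 * β * δ * (r + δ) - Δ)
    γ₁ * θ₁ * (lamT + η / (4 * (r + δ))) > 2 * γ₁ * θ₁ * lamS := by
  intro Δ lamT lamS
  have hs : 0 < r + δ := by linarith
  have hkey := stmt_18_key α β δ η (r + δ) (γ₁ ^ 2 * θ₁ ^ 2)
    ((2 * θ₂ ^ 2 + θ₃ ^ 2) * γ₂ ^ 2) hα hβ hδ hη hs (by positivity) (by positivity)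
    (by nlinarith)
  rw [mul_div_assoc] at hkey
  have hΔeq : Δ = 2 * (γ₁ ^ 2 * θ₁ ^ 2) + (2 * θ₂ ^ 2 + θ₃ ^ 2) * γ₂ ^ 2 := by
    show 2 * θ₁ ^ 2 * γ₁ ^ 2 + (2 * θ₂ ^ 2 + θ₃ ^ 2) * γ₂ ^ 2 = _; ring
  have e1 : lamT = (4 * α * δ * (r + δ) + η * (γ₁ ^ 2 * θ₁ ^ 2)) /
      (4 * (r + δ) * (8 * β * δ * (r + δ) + γ₁ ^ 2 * θ₁ ^ 2 -
        (2 * (γ₁ ^ 2 * θ₁ ^ 2) + (2 * θ₂ ^ 2 + θ₃ ^ 2) * γ₂ ^ 2))) := by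
    show (4 * α * δ * (r + δ) + η * γ₁ ^ 2 * θ₁ ^ 2) /
      (4 * (r + δ) * (8 * β * δ * (r + δ) + γ₁ ^ 2 * θ₁ ^ 2 - Δ)) = _
    rw [hΔeq]; ring_nf
  have e2 : lamS = (α + β * η) * δ /
      (32 * β * δ * (r + δ) - (2 * (γ₁ ^ 2 * θ₁ ^ 2) + (2 * θ₂ ^ 2 + θ₃ ^ 2) * γ₂ ^ 2)) := by
    show (α + β * η) * δ / (32 * β * δ * (r + δ) - Δ) = _
    rw [hΔeq]
  rw [e1, e2, gt_iff_lt]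
  have hpos : (0:ℝ) < γ₁ * θ₁ := by positivity
  nlinarith [mul_lt_mul_of_pos_left hkey hpos]
end
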